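/- Let n ∈ ℕ and let ℓ₁, ℓ₂ : FreeGroup (Fin n) → ℂ be group homomorphisms to the additive group of ℂ. Then there exists a group homomorphism ρ : FreeGroup (Fin n) → SL₂(ℂ[t]), where ℂ[t] is the polynomial ring, such that for every γ ∈ FreeGroup (Fin n), the polynomial Tr(ρ(γ)) has constant coefficient 2 and coefficient of t equal to ℓ₁(γ)·ℓ₂(γ). In other words, Tr(ρₜ(γ)) = 2 + t·⟨γ,γ⟩ + o(t) where ⟨γ,γ⟩ = ℓ₁(γ)ℓ₂(γ) is a quadratic form of rank at most 2. -/

import Mathlib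

/-!
Send the generator `xᵢ` to `[[1 + aᵢbᵢt, aᵢ], [bᵢt, 1]] ∈ SL₂(ℂ[t])` with `aᵢ = ℓ₁(xᵢ)` and
`bᵢ = ℓ₂(xᵢ)`. Modulo `t²`, call a matrix of shape `(a, b)` if it is `[[1 + αt, a], [bt, 1 + δt]]`
with `α + δ = ab`. Matrices of shape `(a, b)` and `(c, d)` multiply to one of shape `(a + c, b + d)`
(the cross terms contribute `ad + bc` to the trace), so the pairs `((a, b), M)` with `M` of shape
`(a, b)` form a subgroup. The image of `γ` therefore has shape `(ℓ₁(γ), ℓ₂(γ))`, and its trace is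
`2 + ℓ₁(γ)ℓ₂(γ) t + O(t²)`.
-/

open Polynomial
open scoped MatrixGroups

variable {R : Type*} [CommRing R]

def FirstOrderShape (a b : R) (M : Matrix (Fin 2) (Fin 2) R[X]) : Prop :=
  (M 0 0).coeff 0 = 1 ∧ (M 1 1).coeff 0 = 1 ∧ (M 1 0).coeff 0 = 0 ∧
    (M 0 1).coeff 0 = a ∧ (M 1 0).coeff 1 = b ∧ (M 0 0).coeff 1 + (M 1 1).coeff 1 = a * b

lemma FirstOrderShape.one : FirstOrderShape (0 : R) 0 1 := by
  simp [FirstOrderShape, coeff_one]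

lemma FirstOrderShape.mul {a b c d : R} {M N : Matrix (Fin 2) (Fin 2) R[X]}
    (hM : FirstOrderShape a b M) (hN : FirstOrderShape c d N) :
    FirstOrderShape (a + c) (b + d) (M * N) := by
  obtain ⟨hM₀₀, hM₁₁, hM₁₀, rfl, rfl, hM⟩ := hM
  obtain ⟨hN₀₀, hN₁₁, hN₁₀, rfl, rfl, hN⟩ := hN
  simp only [FirstOrderShape, Matrix.mul_apply, Fin.sum_univ_two, coeff_add, mul_coeff_zero,
    mul_coeff_one, hM₀₀, hM₁₁, hM₁₀, hN₀₀, hN₁₁, hN₁₀]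
  refine ⟨by ring, by ring, by ring, by ring, by ring, by linear_combination hM + hN⟩

lemma FirstOrderShape.inv {a b : R} {M : SL(2, R[X])} (hM : FirstOrderShape a b M) :
    FirstOrderShape (-a) (-b) (M⁻¹ : SL(2, R[X])) := by
  obtain ⟨hM₀₀, hM₁₁, hM₁₀, rfl, rfl, hM⟩ := hM
  rw [Matrix.SpecialLinearGroup.SL2_inv_expl]
  simpa [FirstOrderShape, hM₀₀, hM₁₁, hM₁₀, add_comm] using hM

lemma FirstOrderShape.trace {a b : R} {M : Matrix (Fin 2) (Fin 2) R[X]}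
    (hM : FirstOrderShape a b M) : M.trace.coeff 0 = 2 ∧ M.trace.coeff 1 = a * b := by
  obtain ⟨hM₀₀, hM₁₁, -, -, -, hM⟩ := hM
  rw [Matrix.trace_fin_two, coeff_add, coeff_add, hM₀₀, hM₁₁, hM]
  exact ⟨one_add_one_eq_two, rfl⟩

variable (R) in
def firstOrderShapeSubgroup : Subgroup (Multiplicative (R × R) × SL(2, R[X])) where
  carrier := {p | FirstOrderShape p.1.toAdd.1 p.1.toAdd.2 p.2}
  one_mem' := FirstOrderShape.one
  mul_mem' hp hq := hp.mul hq
  inv_mem' hp := hp.inv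

lemma mem_firstOrderShapeSubgroup {p : Multiplicative (R × R) × SL(2, R[X])} :
    p ∈ firstOrderShapeSubgroup R ↔ FirstOrderShape p.1.toAdd.1 p.1.toAdd.2 p.2 :=
  Iff.rfl

noncomputable def deformationGenerator (a b : R) : SL(2, R[X]) :=
  ⟨!![1 + C (a * b) * X, C a; C b * X, 1], by rw [Matrix.det_fin_two_of, C_mul]; ring⟩

lemma firstOrderShape_deformationGenerator (a b : R) :
    FirstOrderShape a b (deformationGenerator a b) := by
  simp [FirstOrderShape, deformationGenerator, coeff_one]

theorem no_universal_obstruction_beyond_order_three (n : ℕ)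
    (ℓ₁ ℓ₂ : FreeGroup (Fin n) → ℂ)
    (hℓ₁ : ∀ x y : FreeGroup (Fin n), ℓ₁ (x * y) = ℓ₁ x + ℓ₁ y)
    (hℓ₂ : ∀ x y : FreeGroup (Fin n), ℓ₂ (x * y) = ℓ₂ x + ℓ₂ y) :
    ∃ ρ : FreeGroup (Fin n) →* Matrix.SpecialLinearGroup (Fin 2) (Polynomial ℂ),
      ∀ γ : FreeGroup (Fin n),
        (Matrix.trace ((ρ γ) : Matrix (Fin 2) (Fin 2) (Polynomial ℂ))).coeff 0 = 2 ∧
        (Matrix.trace ((ρ γ) : Matrix (Fin 2) (Fin 2) (Polynomial ℂ))).coeff 1 =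
          ℓ₁ γ * ℓ₂ γ := by
  let ℓ : FreeGroup (Fin n) →* Multiplicative (ℂ × ℂ) :=
    MonoidHom.mk' (fun γ ↦ .ofAdd (ℓ₁ γ, ℓ₂ γ)) fun x y ↦ by rw [hℓ₁, hℓ₂]; rfl
  let ρ : FreeGroup (Fin n) →* SL(2, ℂ[X]) :=
    FreeGroup.lift fun i ↦ deformationGenerator (ℓ₁ (.of i)) (ℓ₂ (.of i))
  have hshape (γ) : (ℓ.prod ρ) γ ∈ firstOrderShapeSubgroup ℂ := by
    induction γ using FreeGroup.induction_on with
    | C1 => rw [map_one]; exact one_mem _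
    | of i =>
      rw [mem_firstOrderShapeSubgroup]
      simpa [ℓ, ρ] using firstOrderShape_deformationGenerator (ℓ₁ (.of i)) (ℓ₂ (.of i))
    | inv_of i hi => rw [map_inv]; exact inv_mem hi
    | mul x y hx hy => rw [map_mul]; exact mul_mem hx hy
  exact ⟨ρ, fun γ ↦ (mem_firstOrderShapeSubgroup.mp (hshape γ)).trace⟩
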